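/- arXiv:2503.03510 — 8 statements merged into one kernel-verified Lean document; each statement's English description precedes it below -/
import Mathlib

section
/- For all complex numbers x, y and all real numbers θ and κ, one has (θ + cosh x)(θ + cosh y) + (cosh κ − 1) cosh x cosh y + sinh κ · sinh x sinh y = θ² − cosh κ + 2θ c_u c_v + e^{κ} c_u² + e^{−κ} c_v², where c_u = cosh((x+y)/2) and c_v = cosh((x−y)/2). -/
private lemma key16 (t a A b B k K : ℂ) (h1 : a * A = 1) (h2 : b * B = 1)
    (_h3 : k * K = 1) :
    (t + (a^2 + A^2)/2) * (t + (b^2 + B^2)/2) +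
      ((k + K)/2 - 1) * ((a^2 + A^2)/2) * ((b^2 + B^2)/2) +
      (k - K)/2 * ((a^2 - A^2)/2) * ((b^2 - B^2)/2) =
    t ^ 2 - (k + K)/2 +
      2 * t * ((a*b + A*B)/2) * ((a*B + A*b)/2) +
      k * ((a*b + A*B)/2) ^ 2 +
      K * ((a*B + A*b)/2) ^ 2 := by
  linear_combination (-(b*B*K)/2 - (b*B*k)/2 - (t*B^2)/2 - (t*b^2)/2) * h1 +
    (-K/2 - k/2 - (t*A^2)/2 - (t*a^2)/2) * h2

/-- The algebraic identity (16): the two-spin function `(1+θ)² Φ_κ(x,y)` written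
as a quadratic form in `c_u = cosh((x+y)/2)` and `c_v = cosh((x-y)/2)`. -/
theorem stmt_4 (x y : ℂ) (θ κ : ℝ) :
    ((θ : ℂ) + Complex.cosh x) * ((θ : ℂ) + Complex.cosh y) +
      (Complex.cosh (κ : ℂ) - 1) * Complex.cosh x * Complex.cosh y +
      Complex.sinh (κ : ℂ) * Complex.sinh x * Complex.sinh y =
    (θ : ℂ) ^ 2 - Complex.cosh (κ : ℂ) +
      2 * (θ : ℂ) * Complex.cosh ((x + y) / 2) * Complex.cosh ((x - y) / 2) +
      Complex.exp (κ : ℂ) * Complex.cosh ((x + y) / 2) ^ 2 +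
      Complex.exp (-(κ : ℂ)) * Complex.cosh ((x - y) / 2) ^ 2 := by
  have key := key16 (θ : ℂ) (Complex.exp (x/2)) (Complex.exp (-(x/2)))
    (Complex.exp (y/2)) (Complex.exp (-(y/2))) (Complex.exp (κ : ℂ))
    (Complex.exp (-(κ : ℂ)))
    (by rw [← Complex.exp_add]; simp)
    (by rw [← Complex.exp_add]; simp)
    (by rw [← Complex.exp_add]; simp)
  have e2 : ∀ z : ℂ, Complex.exp z ^ 2 = Complex.exp (z + z) := by
    intro z; rw [Complex.exp_add, sq]
  have hcx : Complex.cosh x = (Complex.exp (x/2)^2 + Complex.exp (-(x/2))^2)/2 := by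
    rw [Complex.cosh, e2, e2]; ring_nf
  have hcy : Complex.cosh y = (Complex.exp (y/2)^2 + Complex.exp (-(y/2))^2)/2 := by
    rw [Complex.cosh, e2, e2]; ring_nf
  have hsx : Complex.sinh x = (Complex.exp (x/2)^2 - Complex.exp (-(x/2))^2)/2 := by
    rw [Complex.sinh, e2, e2]; ring_nf
  have hsy : Complex.sinh y = (Complex.exp (y/2)^2 - Complex.exp (-(y/2))^2)/2 := by
    rw [Complex.sinh, e2, e2]; ring_nf
  have hck : Complex.cosh (κ : ℂ) = (Complex.exp (κ : ℂ) + Complex.exp (-(κ : ℂ)))/2 :=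
    rfl
  have hsk : Complex.sinh (κ : ℂ) = (Complex.exp (κ : ℂ) - Complex.exp (-(κ : ℂ)))/2 :=
    rfl
  have hcu : Complex.cosh ((x + y) / 2) =
      (Complex.exp (x/2) * Complex.exp (y/2) +
        Complex.exp (-(x/2)) * Complex.exp (-(y/2)))/2 := by
    rw [Complex.cosh, ← Complex.exp_add, ← Complex.exp_add]; ring_nf
  have hcv : Complex.cosh ((x - y) / 2) =
      (Complex.exp (x/2) * Complex.exp (-(y/2)) +
        Complex.exp (-(x/2)) * Complex.exp (y/2))/2 := by
    rw [Complex.cosh, ← Complex.exp_add, ← Complex.exp_add]; ring_nf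
  rw [hcx, hcy, hsx, hsy, hck, hsk, hcu, hcv]
  exact key
end

section
/- Let κ > 0 and set θ = √(cosh κ), ω_± = e^{−κ}(θ ± √(θ² − 1)). Then for all complex x, y, writing c_u = cosh((x+y)/2) and c_v = cosh((x−y)/2), one has (θ + cosh x)(θ + cosh y) + (cosh κ − 1) cosh x cosh y + sinh κ · sinh x sinh y = e^{κ}(c_u + ω_+ c_v)(c_u + ω_− c_v). -/
/-- The factorization (21): with `θ² = cosh κ`, the quadratic form in
`c_u, c_v` factors as `e^κ (c_u + ω₊ c_v)(c_u + ω₋ c_v)`. -/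
theorem stmt_5 (κ : ℝ) (hκ : 0 < κ) (θ : ℝ) (hθ : θ = Real.sqrt (Real.cosh κ))
    (ωp ωm : ℝ)
    (hωp : ωp = Real.exp (-κ) * (θ + Real.sqrt (θ ^ 2 - 1)))
    (hωm : ωm = Real.exp (-κ) * (θ - Real.sqrt (θ ^ 2 - 1)))
    (x y : ℂ) :
    ((θ : ℂ) + Complex.cosh x) * ((θ : ℂ) + Complex.cosh y) +
      (Complex.cosh (κ : ℂ) - 1) * Complex.cosh x * Complex.cosh y +
      Complex.sinh (κ : ℂ) * Complex.sinh x * Complex.sinh y =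
    Complex.exp (κ : ℂ) *
      (Complex.cosh ((x + y) / 2) + (ωp : ℂ) * Complex.cosh ((x - y) / 2)) *
      (Complex.cosh ((x + y) / 2) + (ωm : ℂ) * Complex.cosh ((x - y) / 2)) := by
  subst hωp hωm
  push_cast
  have hθ2 : θ ^ 2 = Real.cosh κ := by
    rw [hθ]; exact Real.sq_sqrt (Real.cosh_pos κ).le
  have h8 : ((θ : ℂ)) ^ 2 = Complex.cosh (κ : ℂ) := by
    rw [← Complex.ofReal_cosh, ← hθ2]; push_cast; ring
  have hs : Real.sqrt (θ ^ 2 - 1) ^ 2 = θ ^ 2 - 1 := by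
    have h1 : (1:ℝ) ≤ θ ^ 2 := hθ2 ▸ Real.one_le_cosh κ
    exact Real.sq_sqrt (by linarith)
  have h9 : ((Real.sqrt (θ ^ 2 - 1) : ℝ) : ℂ) ^ 2 = ((θ : ℂ)) ^ 2 - 1 := by
    exact_mod_cast hs
  have h1 : Complex.cosh (x + y) =
      Complex.cosh x * Complex.cosh y + Complex.sinh x * Complex.sinh y :=
    Complex.cosh_add x y
  have h2 : Complex.cosh (x - y) =
      Complex.cosh x * Complex.cosh y - Complex.sinh x * Complex.sinh y :=
    Complex.cosh_sub x y
  have h3 := Complex.cosh_two_mul ((x + y) / 2)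
  rw [show 2 * ((x + y) / 2) = x + y by ring] at h3
  have h4 := Complex.cosh_two_mul ((x - y) / 2)
  rw [show 2 * ((x - y) / 2) = x - y by ring] at h4
  have ha := Complex.cosh_add ((x + y) / 2) ((x - y) / 2)
  rw [show (x + y) / 2 + (x - y) / 2 = x by ring] at ha
  have hb := Complex.cosh_sub ((x + y) / 2) ((x - y) / 2)
  rw [show (x + y) / 2 - (x - y) / 2 = y by ring] at hb
  have h5 : Complex.cosh x + Complex.cosh y =
      2 * (Complex.cosh ((x + y) / 2) * Complex.cosh ((x - y) / 2)) := by
    linear_combination ha + hb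
  have h6 : Complex.exp (κ : ℂ) = Complex.cosh (κ : ℂ) + Complex.sinh (κ : ℂ) :=
    (Complex.cosh_add_sinh _).symm
  have h7 : Complex.exp (-(κ : ℂ)) = Complex.cosh (κ : ℂ) - Complex.sinh (κ : ℂ) :=
    (Complex.cosh_sub_sinh _).symm
  have h10 : Complex.cosh (κ : ℂ) ^ 2 - Complex.sinh (κ : ℂ) ^ 2 = 1 :=
    Complex.cosh_sq_sub_sinh_sq _
  set cu := Complex.cosh ((x + y) / 2)
  set cv := Complex.cosh ((x - y) / 2)
  set U := Complex.cosh (x + y)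
  set V := Complex.cosh (x - y)
  set ck := Complex.cosh (κ : ℂ)
  set sk := Complex.sinh (κ : ℂ)
  set E := Complex.exp (κ : ℂ)
  set F := Complex.exp (-(κ : ℂ))
  set θc := ((θ : ℝ) : ℂ)
  have hc1 : cu ^ 2 - Complex.sinh ((x + y) / 2) ^ 2 = 1 :=
    Complex.cosh_sq_sub_sinh_sq _
  have hc2 : cv ^ 2 - Complex.sinh ((x - y) / 2) ^ 2 = 1 :=
    Complex.cosh_sq_sub_sinh_sq _
  linear_combination - (E/2) * hc1 - (F/2) * hc2 + h8 - ((ck + sk)/2) * h1 - ((ck - sk)/2) * h2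
    - ((U + 1)/2) * h6 - ((V + 1)/2) * h7 + (E/2) * h3 + (F/2) * h4 + θc * h5
    - (2*θc*cu*cv + F*cv^2) * (h10 + F * h6 + (ck + sk) * h7)
    + E * F^2 * cv^2 * h9
end

section
/- The function ω_+ : [0,∞) → ℝ defined by ω_+(κ) = (1/√2)[e^{−κ}√(e^κ + e^{−κ}) + e^{−κ}(e^{κ/2} − e^{−κ/2})] satisfies ω_+(0) = 1 and is strictly decreasing on [0,∞); in particular its derivative satisfies ω_+′(κ) < 0 for every κ > 0. -/
open Real

noncomputable def stmt7_f (κ : ℝ) : ℝ := (1 / Real.sqrt 2) *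
  (Real.sqrt (Real.exp (-κ) + Real.exp (-(3*κ))) + Real.exp (-(κ/2)) - Real.exp (-(3*κ/2)))

noncomputable def stmt7_D (κ : ℝ) : ℝ := (1 / Real.sqrt 2) *
  ((Real.exp (-κ) * (-1) + Real.exp (-(3*κ)) * (-(3*1))) /
      (2 * Real.sqrt (Real.exp (-κ) + Real.exp (-(3*κ))))
    + Real.exp (-(κ/2)) * (-(1/2)) - Real.exp (-(3*κ/2)) * (-(3*1/2)))

lemma stmt7_hd (κ : ℝ) : HasDerivAt stmt7_f (stmt7_D κ) κ := by
  have h1 : HasDerivAt (fun x : ℝ => Real.exp (-x)) (Real.exp (-κ) * (-1)) κ :=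
    (hasDerivAt_id κ).neg.exp
  have h2 : HasDerivAt (fun x : ℝ => Real.exp (-(3*x))) (Real.exp (-(3*κ)) * (-(3*1))) κ :=
    ((hasDerivAt_id κ).const_mul 3).neg.exp
  have h3 : HasDerivAt (fun x : ℝ => Real.exp (-(x/2))) (Real.exp (-(κ/2)) * (-(1/2))) κ :=
    ((hasDerivAt_id κ).div_const 2).neg.exp
  have h4 : HasDerivAt (fun x : ℝ => Real.exp (-(3*x/2))) (Real.exp (-(3*κ/2)) * (-(3*1/2))) κ :=
    (((hasDerivAt_id κ).const_mul 3).div_const 2).neg.exp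
  have hne : Real.exp (-κ) + Real.exp (-(3*κ)) ≠ 0 := by positivity
  have hsq := (h1.add h2).sqrt hne
  exact ((hsq.add h3).sub h4).const_mul (1 / Real.sqrt 2)

lemma stmt7_Dneg {κ : ℝ} (hκ : 0 < κ) : stmt7_D κ < 0 := by
  set t := Real.exp (-(κ/2)) with hteq
  have ht : 0 < t := Real.exp_pos _
  have ht1 : t < 1 := Real.exp_lt_one_iff.2 (by linarith)
  have e1 : Real.exp (-κ) = t^2 := by
    rw [hteq, sq, ← Real.exp_add]; ring_nf
  have e2 : Real.exp (-(3*κ)) = t^6 := by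
    rw [show -(3*κ) = (6:ℕ) * (-(κ/2)) by push_cast; ring, Real.exp_nat_mul]
  have e3 : Real.exp (-(3*κ/2)) = t^3 := by
    rw [show -(3*κ/2) = (3:ℕ) * (-(κ/2)) by push_cast; ring, Real.exp_nat_mul]
  set s := Real.sqrt (1 + t^4) with hseq
  have hsp : 0 < s := Real.sqrt_pos.2 (by positivity)
  have hs2 : s^2 = 1 + t^4 := Real.sq_sqrt (by positivity)
  have esqrt : Real.sqrt (Real.exp (-κ) + Real.exp (-(3*κ))) = t * s := by
    rw [e1, e2, show t^2 + t^6 = t^2 * (1+t^4) by ring, Real.sqrt_mul (sq_nonneg t),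
      Real.sqrt_sq ht.le]
  have key : (3*t^2 - 1) * s < 1 + 3*t^4 := by
    rcases le_or_gt (3*t^2 - 1) 0 with h | h
    · nlinarith
    · nlinarith [sq_nonneg (s-1), sq_nonneg (t^2 - 1), sq_nonneg t, mul_pos h hsp]
  rw [stmt7_D, esqrt, e1, e2, e3, ← hteq]
  have hts : 0 < 2 * (t * s) := by positivity
  have inner : (t^2 * (-1) + t^6 * (-(3*1))) / (2 * (t * s))
      + t * (-(1/2)) - t^3 * (-(3*1/2)) < 0 := by
    have hrw : (t^2 * (-1) + t^6 * (-(3*1))) / (2 * (t * s))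
        + t * (-(1/2)) - t^3 * (-(3*1/2))
        = (t^2 * ((3*t^2 - 1) * s - (1 + 3*t^4))) / (2 * (t * s)) := by
      field_simp
      ring
    rw [hrw]
    exact div_neg_of_neg_of_pos
      (mul_neg_of_pos_of_neg (pow_pos ht 2) (by linarith)) hts
  exact mul_neg_of_pos_of_neg (by positivity) inner

/-- The function `ω₊(κ)` of (21A) equals `1` at `κ = 0`, is strictly decreasing
on `[0, ∞)`, and has negative derivative at every `κ > 0`. -/
theorem stmt_7 (ω : ℝ → ℝ)
    (hω : ∀ κ : ℝ, ω κ = (1 / Real.sqrt 2) *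
      (Real.exp (-κ) * Real.sqrt (Real.exp κ + Real.exp (-κ)) +
        Real.exp (-κ) * (Real.exp (κ / 2) - Real.exp (-(κ / 2))))) :
    ω 0 = 1 ∧ StrictAntiOn ω (Set.Ici 0) ∧ ∀ κ : ℝ, 0 < κ → deriv ω κ < 0 := by
  have hωf : ω = stmt7_f := by
    funext κ
    rw [hω, stmt7_f]
    have hA : Real.exp (-κ) * Real.sqrt (Real.exp κ + Real.exp (-κ))
        = Real.sqrt (Real.exp (-κ) + Real.exp (-(3*κ))) := by
      have harg : Real.exp (-κ) + Real.exp (-(3*κ))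
          = Real.exp (-κ) ^ 2 * (Real.exp κ + Real.exp (-κ)) := by
        rw [sq, mul_add, ← Real.exp_add, ← Real.exp_add, ← Real.exp_add]
        ring_nf
      rw [harg, Real.sqrt_mul (sq_nonneg _), Real.sqrt_sq (Real.exp_nonneg _)]
    have hB : Real.exp (-κ) * (Real.exp (κ/2) - Real.exp (-(κ/2)))
        = Real.exp (-(κ/2)) - Real.exp (-(3*κ/2)) := by
      rw [mul_sub, ← Real.exp_add, ← Real.exp_add]
      ring_nf
    rw [hA, hB]
    ring
  have hderiv : ∀ x, deriv stmt7_f x = stmt7_D x := fun x => (stmt7_hd x).deriv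
  refine ⟨?_, ?_, ?_⟩
  · rw [hωf, stmt7_f]
    norm_num [Real.exp_zero]
  · rw [hωf]
    refine strictAntiOn_of_deriv_neg (convex_Ici 0)
      (fun x _ => ((stmt7_hd x).differentiableAt.continuousAt.continuousWithinAt)) ?_
    intro x hx
    rw [hderiv]
    exact stmt7_Dneg (by simpa [interior_Ici] using hx)
  · intro κ hκ
    rw [hωf, hderiv]
    exact stmt7_Dneg hκ
end

section
/- Let ε be a real number with 0 < ε < 1, and let x, y be complex numbers with Re x > 0 and Re y > 0. Then cosh(x/2) cosh(y/2) + ε sinh(x/2) sinh(y/2) ≠ 0. -/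
/-!
Dividing by `cosh (x/2) * cosh (y/2)` turns the expression into
`1 + ε * tanh (x/2) * tanh (y/2)`. Since `Re (sinh a * conj (cosh a)) = sinh (2 Re a) / 2`,
`tanh` maps the open right half-plane into itself, and the product of two points of the right
half-plane is never a negative real number.
-/

open Complex ComplexConjugate

namespace Complex

theorem re_sinh_mul_conj_cosh (a : ℂ) :
    (sinh a * conj (cosh a)).re = Real.sinh (2 * a.re) / 2 := by
  have h : sinh a * conj (cosh a) = (sinh ↑(2 * a.re) + sin ↑(2 * a.im) * I) / 2 := by
    rw [← cosh_conj, ← sinh_mul_I, ← sub_conj, ← add_conj, sinh_add, sinh_sub]; ring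
  rw [h, ← ofReal_sinh, ← ofReal_sin]
  simp [-ofReal_sinh, -ofReal_sin]

theorem cosh_ne_zero_of_re_ne_zero {a : ℂ} (ha : a.re ≠ 0) : cosh a ≠ 0 := by
  intro h
  have hre := re_sinh_mul_conj_cosh a
  rw [h, map_zero, mul_zero, zero_re, eq_comm] at hre
  exact ha (by simpa using hre)

theorem re_tanh_pos {a : ℂ} (ha : 0 < a.re) : 0 < (tanh a).re := by
  have hs : 0 < (sinh a * conj (cosh a)).re := by
    rw [re_sinh_mul_conj_cosh]; positivity
  have hc : 0 < normSq (cosh a) := normSq_pos.2 (cosh_ne_zero_of_re_ne_zero ha.ne')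
  rw [mul_re, conj_re, conj_im, mul_neg, sub_neg_eq_add] at hs
  rw [tanh_eq_sinh_div_cosh, div_re, ← add_div]
  exact div_pos hs hc

theorem one_add_mul_mul_ne_zero {c : ℝ} (hc : 0 ≤ c) {z w : ℂ} (hz : 0 < z.re)
    (hw : 0 < w.re) : 1 + c * z * w ≠ 0 := by
  intro h
  -- multiplying by `conj z` makes both summands have nonnegative real part
  have h' : conj z * (1 + c * z * w) = conj z + ↑(c * normSq z) * w := by
    rw [ofReal_mul, normSq_eq_conj_mul_self]; ring
  have hre := congrArg re h'
  rw [h, mul_zero, zero_re, add_re, re_ofReal_mul, conj_re] at hre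
  have : 0 ≤ c * normSq z * w.re := mul_nonneg (mul_nonneg hc (normSq_nonneg z)) hw.le
  linarith

end Complex

theorem stmt_9_general (ε : ℝ) (hε0 : 0 < ε) (x y : ℂ)
    (hx : 0 < x.re) (hy : 0 < y.re) :
    Complex.cosh (x / 2) * Complex.cosh (y / 2) +
      (ε : ℂ) * Complex.sinh (x / 2) * Complex.sinh (y / 2) ≠ 0 := by
  have hx' : 0 < (x / 2).re := by rw [div_ofNat_re]; positivity
  have hy' : 0 < (y / 2).re := by rw [div_ofNat_re]; positivity
  have hcx := cosh_ne_zero_of_re_ne_zero hx'.ne'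
  have hcy := cosh_ne_zero_of_re_ne_zero hy'.ne'
  have hfactor : cosh (x / 2) * cosh (y / 2) + ε * sinh (x / 2) * sinh (y / 2) =
      cosh (x / 2) * cosh (y / 2) * (1 + ε * tanh (x / 2) * tanh (y / 2)) := by
    rw [tanh_eq_sinh_div_cosh, tanh_eq_sinh_div_cosh]; field_simp
  rw [hfactor]
  exact mul_ne_zero (mul_ne_zero hcx hcy)
    (one_add_mul_mul_ne_zero hε0.le (re_tanh_pos hx') (re_tanh_pos hy'))

/-- The key nonvanishing lemma (21C): for `0 < ε < 1`, the function
`cosh(x/2)cosh(y/2) + ε sinh(x/2)sinh(y/2)` does not vanish on the product of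
open right half-planes. -/
theorem stmt_9 (ε : ℝ) (hε0 : 0 < ε) (hε1 : ε < 1) (x y : ℂ)
    (hx : 0 < x.re) (hy : 0 < y.re) :
    Complex.cosh (x / 2) * Complex.cosh (y / 2) +
      (ε : ℂ) * Complex.sinh (x / 2) * Complex.sinh (y / 2) ≠ 0 :=
  stmt_9_general ε hε0 x y hx hy
end

section
/- Let y be a complex number with cosh(y/2) ≠ 0, and write tanh(y/2) = ρ e^{iα} with ρ ≥ 0 and α real. Then 1 + ρ² − 2ρ cos α > 0 and |e^{y}|² = (1 + ρ² + 2ρ cos α)/(1 + ρ² − 2ρ cos α). -/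
namespace Complex

theorem one_add_tanh_eq_exp_div_cosh {w : ℂ} (hw : cosh w ≠ 0) :
    1 + tanh w = exp w / cosh w := by
  rw [tanh_eq_sinh_div_cosh, ← cosh_add_sinh w]
  field_simp

theorem one_sub_tanh_eq_exp_neg_div_cosh {w : ℂ} (hw : cosh w ≠ 0) :
    1 - tanh w = exp (-w) / cosh w := by
  rw [tanh_eq_sinh_div_cosh, ← cosh_sub_sinh w]
  field_simp

/-- Where `cosh w = 0`, the junk value `tanh w = sinh w / 0 = 0` keeps this true. -/
theorem one_sub_tanh_ne_zero (w : ℂ) : 1 - tanh w ≠ 0 := by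
  by_cases hw : cosh w = 0
  · simp [tanh_eq_sinh_div_cosh, hw]
  · rw [one_sub_tanh_eq_exp_neg_div_cosh hw]
    exact div_ne_zero (exp_ne_zero _) hw

theorem exp_eq_one_add_tanh_div_one_sub_tanh {z : ℂ} (hz : cosh (z / 2) ≠ 0) :
    exp z = (1 + tanh (z / 2)) / (1 - tanh (z / 2)) := by
  rw [one_add_tanh_eq_exp_div_cosh hz, one_sub_tanh_eq_exp_neg_div_cosh hz,
    div_div_div_cancel_right₀ hz, exp_neg, div_inv_eq_mul, ← exp_add, add_halves]

theorem normSq_one_add_ofReal_mul_exp_mul_I (ρ α : ℝ) :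
    normSq (1 + ρ * exp (α * I)) = 1 + ρ ^ 2 + 2 * ρ * Real.cos α := by
  rw [exp_mul_I, ← ofReal_cos, ← ofReal_sin, normSq_apply]
  simp only [add_re, add_im, mul_re, mul_im, one_re, one_im, ofReal_re, ofReal_im, I_re, I_im]
  linear_combination ρ ^ 2 * Real.sin_sq_add_cos_sq α

theorem normSq_one_sub_ofReal_mul_exp_mul_I (ρ α : ℝ) :
    normSq (1 - ρ * exp (α * I)) = 1 + ρ ^ 2 - 2 * ρ * Real.cos α := by
  rw [exp_mul_I, ← ofReal_cos, ← ofReal_sin, normSq_apply]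
  simp only [sub_re, sub_im, add_re, add_im, mul_re, mul_im, one_re, one_im, ofReal_re, ofReal_im,
    I_re, I_im]
  linear_combination ρ ^ 2 * Real.sin_sq_add_cos_sq α

end Complex

open Complex in
theorem stmt_10_general (y : ℂ) (hy : Complex.cosh (y / 2) ≠ 0) (ρ α : ℝ)
    (hpolar : Complex.tanh (y / 2) = (ρ : ℂ) * Complex.exp ((α : ℂ) * Complex.I)) :
    0 < 1 + ρ ^ 2 - 2 * ρ * Real.cos α ∧
    ‖Complex.exp y‖ ^ 2 =
      (1 + ρ ^ 2 + 2 * ρ * Real.cos α) / (1 + ρ ^ 2 - 2 * ρ * Real.cos α) := by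
  rw [← normSq_one_add_ofReal_mul_exp_mul_I, ← normSq_one_sub_ofReal_mul_exp_mul_I, ← hpolar,
    exp_eq_one_add_tanh_div_one_sub_tanh hy, norm_div, div_pow, Complex.sq_norm, Complex.sq_norm]
  exact ⟨normSq_pos.mpr (one_sub_tanh_ne_zero _), rfl⟩

/-- The modulus formula (24) for `|e^y|²` in terms of the polar form
`tanh(y/2) = ρ e^{iα}`. -/
theorem stmt_10 (y : ℂ) (hy : Complex.cosh (y / 2) ≠ 0) (ρ α : ℝ) (hρ : 0 ≤ ρ)
    (hpolar : Complex.tanh (y / 2) = (ρ : ℂ) * Complex.exp ((α : ℂ) * Complex.I)) :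
    0 < 1 + ρ ^ 2 - 2 * ρ * Real.cos α ∧
    ‖Complex.exp y‖ ^ 2 =
      (1 + ρ ^ 2 + 2 * ρ * Real.cos α) / (1 + ρ ^ 2 - 2 * ρ * Real.cos α) :=
  stmt_10_general y hy ρ α hpolar
end

section
/- Let ε ∈ (0,1) be real and let x, y be complex numbers with sinh(x/2) ≠ 0, sinh(y/2) ≠ 0, cosh(y/2) ≠ 0, and cosh(x/2) cosh(y/2) + ε sinh(x/2) sinh(y/2) = 0. Write tanh(y/2) = ρ e^{iα} with ρ > 0 and α real. Then 1 + ε²ρ² + 2ερ cos α > 0 and |e^{x}|² = (1 + ε²ρ² − 2ερ cos α)/(1 + ε²ρ² + 2ερ cos α). -/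
/-! Put `w = ε tanh(y/2) = ερ e^{iα}`. The vanishing equation says `cosh(x/2) = -w sinh(x/2)`, so
`e^{±x/2} = cosh(x/2) ± sinh(x/2)` are `(1 - w) sinh(x/2)` and `-(1 + w) sinh(x/2)`. Their product is
`1`, which forces `1 + w ≠ 0`, and their quotient is `e^x = (w - 1)/(w + 1)`; taking moduli gives the
formula. -/

open Complex

theorem cosh_add_mul_tanh_mul_sinh_eq_zero {a b t : ℂ} (hb : cosh b ≠ 0)
    (h : cosh a * cosh b + t * sinh a * sinh b = 0) :
    cosh a + t * tanh b * sinh a = 0 := by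
  rw [tanh_eq_sinh_div_cosh]
  field_simp
  linear_combination h

theorem one_add_ne_zero_of_cosh_add_mul_sinh_eq_zero {z w : ℂ}
    (h : cosh z + w * sinh z = 0) : 1 + w ≠ 0 := by
  intro hw
  have hcosh : cosh z = sinh z := by linear_combination h - sinh z * hw
  simpa [hcosh] using cosh_sq_sub_sinh_sq z

theorem exp_two_mul_of_cosh_add_mul_sinh_eq_zero {z w : ℂ}
    (h : cosh z + w * sinh z = 0) : exp (2 * z) = (w - 1) / (w + 1) := by
  have hw : w + 1 ≠ 0 := by
    rw [add_comm]; exact one_add_ne_zero_of_cosh_add_mul_sinh_eq_zero h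
  have hprod : -((1 - w) * (1 + w)) * sinh z ^ 2 = 1 := by
    linear_combination cosh_sq_sub_sinh_sq z - (cosh z - w * sinh z) * h
  rw [eq_div_iff hw, two_mul, exp_add, ← cosh_add_sinh]
  linear_combination (w + 1) * (2 * (1 - w) * sinh z + cosh z + w * sinh z) * h - (1 - w) * hprod

theorem normSq_ofReal_mul_exp_mul_I_add_one (r α : ℝ) :
    normSq (r * exp (α * I) + 1) = 1 + r ^ 2 + 2 * r * Real.cos α := by
  rw [exp_mul_I, ← ofReal_cos, ← ofReal_sin, normSq_apply]
  simp only [add_re, add_im, mul_re, mul_im, ofReal_re, ofReal_im, I_re, I_im, one_re, one_im]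
  linear_combination r ^ 2 * Real.sin_sq_add_cos_sq α

theorem normSq_ofReal_mul_exp_mul_I_sub_one (r α : ℝ) :
    normSq (r * exp (α * I) - 1) = 1 + r ^ 2 - 2 * r * Real.cos α := by
  rw [exp_mul_I, ← ofReal_cos, ← ofReal_sin, normSq_apply]
  simp only [sub_re, sub_im, add_re, add_im, mul_re, mul_im, ofReal_re, ofReal_im, I_re, I_im,
    one_re, one_im]
  linear_combination r ^ 2 * Real.sin_sq_add_cos_sq α

theorem stmt_11_general (ε : ℝ) (x y : ℂ)
    (hcy : Complex.cosh (y / 2) ≠ 0)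
    (hzero : Complex.cosh (x / 2) * Complex.cosh (y / 2) +
      (ε : ℂ) * Complex.sinh (x / 2) * Complex.sinh (y / 2) = 0)
    (ρ α : ℝ)
    (hpolar : Complex.tanh (y / 2) = (ρ : ℂ) * Complex.exp ((α : ℂ) * Complex.I)) :
    0 < 1 + ε ^ 2 * ρ ^ 2 + 2 * ε * ρ * Real.cos α ∧
    ‖Complex.exp x‖ ^ 2 =
      (1 + ε ^ 2 * ρ ^ 2 - 2 * ε * ρ * Real.cos α) /
        (1 + ε ^ 2 * ρ ^ 2 + 2 * ε * ρ * Real.cos α) := by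
  set w : ℂ := ((ε * ρ : ℝ) : ℂ) * exp (α * I) with hw
  have hvanish : cosh (x / 2) + w * sinh (x / 2) = 0 := by
    have := cosh_add_mul_tanh_mul_sinh_eq_zero hcy hzero
    rwa [hpolar, ← mul_assoc, ← ofReal_mul] at this
  have hplus : normSq (w + 1) = 1 + ε ^ 2 * ρ ^ 2 + 2 * ε * ρ * Real.cos α := by
    rw [hw, normSq_ofReal_mul_exp_mul_I_add_one]; ring
  have hminus : normSq (w - 1) = 1 + ε ^ 2 * ρ ^ 2 - 2 * ε * ρ * Real.cos α := by
    rw [hw, normSq_ofReal_mul_exp_mul_I_sub_one]; ring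
  have hexp : exp x = (w - 1) / (w + 1) := by
    rw [← exp_two_mul_of_cosh_add_mul_sinh_eq_zero hvanish, mul_div_cancel₀ x two_ne_zero]
  refine ⟨?_, ?_⟩
  · rw [← hplus, normSq_pos, add_comm]
    exact one_add_ne_zero_of_cosh_add_mul_sinh_eq_zero hvanish
  · rw [← hplus, ← hminus, hexp, norm_div, div_pow, ← normSq_eq_norm_sq, ← normSq_eq_norm_sq]

/-- The modulus formula (24) for `|e^x|²`: if
`cosh(x/2)cosh(y/2) + ε sinh(x/2)sinh(y/2) = 0` and `tanh(y/2) = ρ e^{iα}`, then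
`|e^x|² = (1 + ε²ρ² - 2ερ cos α)/(1 + ε²ρ² + 2ερ cos α)`. -/
theorem stmt_11 (ε : ℝ) (hε0 : 0 < ε) (hε1 : ε < 1) (x y : ℂ)
    (hsx : Complex.sinh (x / 2) ≠ 0) (hsy : Complex.sinh (y / 2) ≠ 0)
    (hcy : Complex.cosh (y / 2) ≠ 0)
    (hzero : Complex.cosh (x / 2) * Complex.cosh (y / 2) +
      (ε : ℂ) * Complex.sinh (x / 2) * Complex.sinh (y / 2) = 0)
    (ρ α : ℝ) (hρ : 0 < ρ)
    (hpolar : Complex.tanh (y / 2) = (ρ : ℂ) * Complex.exp ((α : ℂ) * Complex.I)) :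
    0 < 1 + ε ^ 2 * ρ ^ 2 + 2 * ε * ρ * Real.cos α ∧
    ‖Complex.exp x‖ ^ 2 =
      (1 + ε ^ 2 * ρ ^ 2 - 2 * ε * ρ * Real.cos α) /
        (1 + ε ^ 2 * ρ ^ 2 + 2 * ε * ρ * Real.cos α) :=
  stmt_11_general ε x y hcy hzero ρ α hpolar
end

section
/- Let K > 0 and θ > 0 be real numbers with θ² ≤ (e^{K} + 1)/2, and set δ = √((e^{K} − 1)((e^{K} + 1)/2 − θ²)) and ε^± = e^{−K}(−θ ± δ). Then |ε^+| ≤ |ε^−| < 1. -/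
/-- The roots `ε^± = e^{-K}(−θ ± δ)` of the quadratic
`e^K c² + 2θc + θ² − sinh K` satisfy `|ε⁺| ≤ |ε⁻| < 1`. -/
theorem stmt_15 (K θ : ℝ) (hK : 0 < K) (hθ : 0 < θ)
    (hθK : θ ^ 2 ≤ (Real.exp K + 1) / 2)
    (δ εp εm : ℝ)
    (hδ : δ = Real.sqrt ((Real.exp K - 1) * ((Real.exp K + 1) / 2 - θ ^ 2)))
    (hεp : εp = Real.exp (-K) * (-θ + δ))
    (hεm : εm = Real.exp (-K) * (-θ - δ)) :
    |εp| ≤ |εm| ∧ |εm| < 1 := by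
  have hE : 1 < Real.exp K := by
    rw [← Real.exp_zero]; exact Real.exp_lt_exp.mpr hK
  have hδ0 : 0 ≤ δ := hδ ▸ Real.sqrt_nonneg _
  have hδ2 : δ ^ 2 = (Real.exp K - 1) * ((Real.exp K + 1) / 2 - θ ^ 2) := by
    rw [hδ, Real.sq_sqrt]; nlinarith
  have hen : 0 < Real.exp (-K) := Real.exp_pos _
  have hinv : Real.exp (-K) * Real.exp K = 1 := by
    rw [← Real.exp_add]; simp
  have hθlt : θ < Real.exp K := by nlinarith
  have hlt : θ + δ < Real.exp K := by
    nlinarith [hδ2, sq_nonneg (θ - 1), sq_nonneg (Real.exp K - 1)]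
  have h2 : |εm| = Real.exp (-K) * (θ + δ) := by
    rw [hεm, abs_mul, abs_of_pos hen, abs_of_nonpos (by linarith)]; ring
  constructor
  · rw [h2, hεp, abs_mul, abs_of_pos hen]
    have : |(-θ + δ)| ≤ θ + δ := abs_le.mpr ⟨by linarith, by linarith⟩
    nlinarith
  · rw [h2]; nlinarith
end

section
/- Let θ be a real number. If 0 ≤ θ ≤ 1, then every complex zero z of cosh z + θ satisfies Re z = 0; if θ > 1, then every complex zero z of cosh z + θ satisfies Re z ≠ 0. -/
/-- The single-spin function `cosh z + θ` has purely imaginary zeros if and only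
if `θ ≤ 1`: for `0 ≤ θ ≤ 1` every zero satisfies `Re z = 0`, while for `θ > 1`
every zero satisfies `Re z ≠ 0`. -/
theorem stmt_18 (θ : ℝ) :
    (0 ≤ θ → θ ≤ 1 → ∀ z : ℂ, Complex.cosh z + (θ : ℂ) = 0 → z.re = 0) ∧
    (1 < θ → ∀ z : ℂ, Complex.cosh z + (θ : ℂ) = 0 → z.re ≠ 0) := by
  have key : ∀ z : ℂ, Complex.cosh z + (θ : ℂ) = 0 →
      Real.cosh z.re * Real.cos z.im + θ = 0 ∧ Real.sinh z.re * Real.sin z.im = 0 := by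
    intro z hz
    have hre := congrArg Complex.re hz
    have him := congrArg Complex.im hz
    have hc : Complex.cosh z = (Real.cosh z.re * Real.cos z.im : ℝ) +
        (Real.sinh z.re * Real.sin z.im : ℝ) * Complex.I := by
      conv_lhs => rw [show z = (z.re : ℂ) + (z.im : ℂ) * Complex.I from (Complex.re_add_im z).symm]
      rw [Complex.cosh_add, Complex.cosh_mul_I, Complex.sinh_mul_I,
        ← Complex.ofReal_cosh, ← Complex.ofReal_sinh, ← Complex.ofReal_cos, ← Complex.ofReal_sin]
      push_cast
      ring
    rw [hc] at hre him
    simp only [Complex.add_re, Complex.add_im, Complex.mul_re, Complex.mul_im,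
      Complex.I_re, Complex.I_im, Complex.ofReal_re, Complex.ofReal_im, Complex.zero_re,
      Complex.zero_im, mul_one, mul_zero, sub_zero, zero_add, add_zero, zero_mul, zero_sub,
      neg_zero] at hre him
    exact ⟨hre, him⟩
  constructor
  · intro h0 h1 z hz
    obtain ⟨hre, him⟩ := key z hz
    by_contra hx
    have hs : Real.sin z.im = 0 := by
      have := Real.sinh_ne_zero.mpr hx
      rcases mul_eq_zero.mp him with h | h
      · exact absurd h this
      · exact h
    have hc2 : Real.cos z.im ^ 2 = 1 := by
      have := Real.sin_sq_add_cos_sq z.im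
      nlinarith
    have hcosh : 1 < Real.cosh z.re := Real.one_lt_cosh.mpr hx
    have h2 : Real.cosh z.re ^ 2 = θ ^ 2 := by nlinarith
    nlinarith
  · intro hθ z hz hx
    obtain ⟨hre, him⟩ := key z hz
    rw [hx, Real.cosh_zero, one_mul] at hre
    have := Real.neg_one_le_cos z.im
    linarith
end
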